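/- Let M = (R,T,c) and M' = (R,T,c') be MRTA instances on the same robots and tasks whose cost functions c and c' are both injective on E, and let (W, a) be the output of the SSI auction on M. Suppose there exists an edge e ∈ E not appearing in W such that c'(f) = c(f) for all f ∈ E ∖ {e}. Then the SSI auction on M' outputs the same winning-edge list and assignment function as the SSI auction on M if and only if c'(e) > max_{k ∈ B_e} c(w_k) (with the condition holding vacuously when B_e = ∅). -/

import Mathlib

open Finset

/-- The set of tasks assigned in the bid rounds with (0-based) index `< k`. -/
def auctionAssigned {V : Type*} [DecidableEq V] {n : ℕ} (w : Fin n → V × V) (k : ℕ) :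
    Finset V :=
  (Finset.univ.filter fun i : Fin n => (i : ℕ) < k).image fun i => (w i).2

/-- `w` is the output of the SSI auction for the instance `(R, T, c)`. -/
def IsAuction {V : Type*} [DecidableEq V] (R T : Finset V) (c : V → V → ℝ) {n : ℕ}
    (w : Fin n → V × V) : Prop :=
  ∀ k : Fin n,
    (w k).1 ∈ R ∪ auctionAssigned w (k : ℕ) ∧
    (w k).2 ∈ T \ auctionAssigned w (k : ℕ) ∧
    ∀ s ∈ R ∪ auctionAssigned w (k : ℕ), ∀ t ∈ T \ auctionAssigned w (k : ℕ),
      (s, t) ≠ w k → c (w k).1 (w k).2 < c s t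

/-- `c` is injective on the edge set of the complete graph. -/
def InjOnEdges {V : Type*} (c : V → V → ℝ) : Prop :=
  ∀ x y x' y' : V, x ≠ y → x' ≠ y' → c x y = c x' y' →
    (x = x' ∧ y = y') ∨ (x = y' ∧ y = x')

/-- The assignment function of the auction: `a v = k` if `v` is the task assigned
in (1-based) round `k`, and `a v = 0` if `v` is never assigned (e.g. a robot). -/
def assignFn {V : Type*} [DecidableEq V] {n : ℕ} (w : Fin n → V × V) (v : V) : ℕ :=
  (Finset.univ.filter fun k : Fin n => (w k).2 = v).sup fun k => (k : ℕ) + 1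

/-- The set `B_e` of (1-based) bid rounds considering the edge `e = {x,y}`:
`B_e = {k : min(a x, a y) < k ≤ max(a x, a y)}`. -/
def bidRounds {V : Type*} (a : V → ℕ) (x y : V) : Finset ℕ :=
  Finset.Ioc (min (a x) (a y)) (max (a x) (a y))

/-!
A task is unassigned before its round and assigned from then on, while a robot is always
available as a bidder. Hence, with `a` the assignment function, a vertex `v` can bid in
(0-based) round `k` iff `a v ≤ k`, and can be bid on iff `k < a v`; so the edge `{x, y}`
is a bid of round `k` exactly when `k + 1 ∈ B_e`. Changing the cost of an edge that never
wins only affects the comparisons in those rounds, and keeps every one of them iff the new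
cost exceeds each winning cost there.
-/

section Auction

variable {V : Type*} [DecidableEq V] {R T : Finset V} {c : V → V → ℝ} {n : ℕ}
  {w : Fin n → V × V}

theorem mem_auctionAssigned {v : V} {m : ℕ} :
    v ∈ auctionAssigned w m ↔ ∃ i : Fin n, (i : ℕ) < m ∧ (w i).2 = v := by
  simp [auctionAssigned]

theorem assignFn_eq_zero {v : V} (hv : ∀ i, (w i).2 ≠ v) : assignFn w v = 0 := by
  simp [assignFn, hv]

namespace IsAuction

theorem snd_mem (hw : IsAuction R T c w) (k : Fin n) : (w k).2 ∈ T :=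
  (mem_sdiff.1 (hw k).2.1).1

theorem snd_injective (hw : IsAuction R T c w) : Function.Injective fun i => (w i).2 := by
  have hfresh (i j : Fin n) (hij : (i : ℕ) < j) : (w i).2 ≠ (w j).2 := fun h =>
    (mem_sdiff.1 (hw j).2.1).2 (mem_auctionAssigned.2 ⟨i, hij, h⟩)
  intro i j h
  by_contra hne
  rcases lt_or_gt_of_ne hne with hlt | hlt
  · exact hfresh i j hlt h
  · exact hfresh j i hlt h.symm

theorem snd_mem_auctionAssigned_iff (hw : IsAuction R T c w) (j : Fin n) (m : ℕ) :
    (w j).2 ∈ auctionAssigned w m ↔ (j : ℕ) < m := by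
  rw [mem_auctionAssigned]
  constructor
  · rintro ⟨i, hi, h⟩
    exact hw.snd_injective h ▸ hi
  · exact fun h => ⟨j, h, rfl⟩

theorem assignFn_snd (hw : IsAuction R T c w) (j : Fin n) : assignFn w (w j).2 = j + 1 := by
  have : (univ.filter fun k : Fin n => (w k).2 = (w j).2) = {j} := by
    ext k
    simpa using hw.snd_injective.eq_iff (a := k) (b := j)
  simp [assignFn, this]

theorem assignFn_eq_zero_of_notMem (hw : IsAuction R T c w) {v : V} (hv : v ∉ T) :
    assignFn w v = 0 :=
  assignFn_eq_zero fun i h => hv (h ▸ hw.snd_mem i)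

theorem exists_snd_eq {w : Fin T.card → V × V} (hw : IsAuction R T c w) {v : V}
    (hv : v ∈ T) : ∃ j, (w j).2 = v := by
  have himage : univ.image (fun j => (w j).2) = T :=
    eq_of_subset_of_card_le (image_subset_iff.2 fun j _ => hw.snd_mem j)
      (by rw [card_image_of_injective _ hw.snd_injective, card_univ, Fintype.card_fin])
  rw [← himage] at hv
  simpa using hv

variable [Fintype V] {w : Fin T.card → V × V}

theorem mem_union_auctionAssigned_iff (hw : IsAuction R T c w) (hdisj : Disjoint R T)
    (hunion : R ∪ T = univ) (v : V) (m : ℕ) :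
    v ∈ R ∪ auctionAssigned w m ↔ assignFn w v ≤ m := by
  rcases mem_union.1 (hunion ▸ mem_univ v) with hvR | hvT
  · simp [hvR, hw.assignFn_eq_zero_of_notMem (disjoint_left.1 hdisj hvR)]
  · obtain ⟨j, rfl⟩ := hw.exists_snd_eq hvT
    simp [disjoint_right.1 hdisj hvT, hw.snd_mem_auctionAssigned_iff, hw.assignFn_snd]

theorem mem_sdiff_auctionAssigned_iff (hw : IsAuction R T c w) (hdisj : Disjoint R T)
    (hunion : R ∪ T = univ) (v : V) (m : ℕ) :
    v ∈ T \ auctionAssigned w m ↔ m < assignFn w v := by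
  rcases mem_union.1 (hunion ▸ mem_univ v) with hvR | hvT
  · have hvT : v ∉ T := disjoint_left.1 hdisj hvR
    simp [hvT, hw.assignFn_eq_zero_of_notMem hvT]
  · obtain ⟨j, rfl⟩ := hw.exists_snd_eq hvT
    simp [hvT, hw.snd_mem_auctionAssigned_iff, hw.assignFn_snd]

theorem isBid_iff_mem_bidRounds (hw : IsAuction R T c w) (hdisj : Disjoint R T)
    (hunion : R ∪ T = univ) (k : ℕ) (x y : V) :
    (x ∈ R ∪ auctionAssigned w k ∧ y ∈ T \ auctionAssigned w k) ∨
        (y ∈ R ∪ auctionAssigned w k ∧ x ∈ T \ auctionAssigned w k) ↔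
      k + 1 ∈ bidRounds (assignFn w) x y := by
  simp only [hw.mem_union_auctionAssigned_iff hdisj hunion,
    hw.mem_sdiff_auctionAssigned_iff hdisj hunion, bidRounds, mem_Ioc]
  omega

end IsAuction

end Auction

theorem statement6_general {V : Type*} [Fintype V] [DecidableEq V] (R T : Finset V)
    (hdisj : Disjoint R T) (hunion : R ∪ T = Finset.univ)
    (c c' : V → V → ℝ)
    (hsymm' : ∀ x y, c' x y = c' y x)
    (w : Fin T.card → V × V) (hw : IsAuction R T c w)
    -- the edge `e = {x,y}` does not appear in `W`
    (x y : V)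
    (hnotW : ∀ k : Fin T.card, w k ≠ (x, y) ∧ w k ≠ (y, x))
    -- `c'` agrees with `c` on every edge other than `e`
    (hsame : ∀ p q : V, (p, q) ≠ (x, y) → (p, q) ≠ (y, x) → c' p q = c p q) :
    -- the auction on `c'` outputs the same winning-edge list (hence the same
    -- assignment function) iff `c'(e) > max_{k ∈ B_e} c(w_k)` (vacuous if `B_e = ∅`)
    IsAuction R T c' w ↔
      ∀ k : Fin T.card, ((k : ℕ) + 1) ∈ bidRounds (assignFn w) x y →
        c (w k).1 (w k).2 < c' x y := by
  have hwin (k : Fin T.card) : c' (w k).1 (w k).2 = c (w k).1 (w k).2 :=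
    hsame _ _ (hnotW k).1 (hnotW k).2
  have hbid (k : Fin T.card) := hw.isBid_iff_mem_bidRounds hdisj hunion k x y
  constructor
  · intro hw' k hk
    rcases (hbid k).2 hk with ⟨hx, hy⟩ | ⟨hy, hx⟩
    · simpa [hwin k] using (hw' k).2.2 x hx y hy (hnotW k).1.symm
    · simpa [hwin k, hsymm' y x] using (hw' k).2.2 y hy x hx (hnotW k).2.symm
  · intro h k
    refine ⟨(hw k).1, (hw k).2.1, fun s hs t ht hne => ?_⟩
    rw [hwin k]
    by_cases hst : (s, t) = (x, y)
    · obtain ⟨rfl, rfl⟩ := Prod.mk.inj hst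
      exact h k ((hbid k).1 (Or.inl ⟨hs, ht⟩))
    by_cases hts : (s, t) = (y, x)
    · obtain ⟨rfl, rfl⟩ := Prod.mk.inj hts
      rw [hsymm']
      exact h k ((hbid k).1 (Or.inr ⟨hs, ht⟩))
    rw [hsame s t hst hts]
    exact (hw k).2.2 s hs t ht hne

theorem statement6 {V : Type*} [Fintype V] [DecidableEq V] (R T : Finset V)
    (hdisj : Disjoint R T) (hunion : R ∪ T = Finset.univ) (hcard : 3 ≤ Fintype.card V)
    (c c' : V → V → ℝ)
    (hsymm : ∀ x y, c x y = c y x) (hnonneg : ∀ x y, 0 ≤ c x y) (hinj : InjOnEdges c)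
    (hsymm' : ∀ x y, c' x y = c' y x) (hnonneg' : ∀ x y, 0 ≤ c' x y) (hinj' : InjOnEdges c')
    (w : Fin T.card → V × V) (hw : IsAuction R T c w)
    -- the edge `e = {x,y}` does not appear in `W`
    (x y : V) (hxy : x ≠ y)
    (hnotW : ∀ k : Fin T.card, w k ≠ (x, y) ∧ w k ≠ (y, x))
    -- `c'` agrees with `c` on every edge other than `e`
    (hsame : ∀ p q : V, (p, q) ≠ (x, y) → (p, q) ≠ (y, x) → c' p q = c p q) :
    -- the auction on `c'` outputs the same winning-edge list (hence the same
    -- assignment function) iff `c'(e) > max_{k ∈ B_e} c(w_k)` (vacuous if `B_e = ∅`)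
    IsAuction R T c' w ↔
      ∀ k : Fin T.card, ((k : ℕ) + 1) ∈ bidRounds (assignFn w) x y →
        c (w k).1 (w k).2 < c' x y :=
  statement6_general R T hdisj hunion c c' hsymm' w hw x y hnotW hsame
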